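/- Let T ∈ (0,∞), let θ be a partition of [0,T], let (Ω,F,P) be a probability space, and let (E,‖·‖_E) be a real Banach space. Then for all p ∈ [1,∞), β ∈ [0,1], γ ∈ [β,1] and all strongly measurable stochastic processes X, Y : [0,T]×Ω → E it holds that ‖X − Y‖_{C^β([0,T];L^p)} ≤ (2·(d_max(θ))^{−β} + 1) · [ sup_{t∈θ} ‖X_t − Y_t‖_{L^p(P;E)} + (d_max(θ))^γ · ( |X|_{C^γ([0,T];L^p)} + |Y|_{C^γ([0,T];L^p)} ) ] (in [0,∞]). -/

import Mathlib

/-!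
Write `Z = X - Y` and let `h` be the mesh of the partition. Every time lies within `h` of a node,
so `‖Z_t‖ ≤ ‖Z_node‖ + h^γ |Z|_γ =: B`. For the `β`-seminorm, split by the size of `|s - t|`: if
`|s - t| ≤ h` the quotient is at most `|Z|_γ |s - t|^(γ - β) ≤ h^(-β) h^γ |Z|_γ`, otherwise it is at
most `2 B / |s - t|^β ≤ 2 h^(-β) B`. Hence `‖Z‖_β ≤ (2 h^(-β) + 1) B`, and `|Z|_γ ≤ |X|_γ + |Y|_γ`.
-/

open MeasureTheory ENNReal

/-- Hölder seminorm in time of a stochastic process, measured in `L^p(P;E)`. -/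
noncomputable def lpHolderSemi {Ω E : Type} [MeasurableSpace Ω] [NormedAddCommGroup E]
    (P : MeasureTheory.Measure Ω) (T p r : ℝ) (X : ℝ → Ω → E) : ℝ≥0∞ :=
  ⨆ (s : ℝ) (t : ℝ) (_ : s ∈ Set.Icc (0:ℝ) T) (_ : t ∈ Set.Icc (0:ℝ) T)
    (_ : s ≠ t),
    MeasureTheory.eLpNorm (fun ω => X s ω - X t ω) (ENNReal.ofReal p) P
      / ENNReal.ofReal (|s - t| ^ r)

/-- Supremum in time of the `L^p(P;E)`-norms of a stochastic process. -/
noncomputable def lpSupNorm {Ω E : Type} [MeasurableSpace Ω] [NormedAddCommGroup E]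
    (P : MeasureTheory.Measure Ω) (T p : ℝ) (X : ℝ → Ω → E) : ℝ≥0∞ :=
  ⨆ (t : ℝ) (_ : t ∈ Set.Icc (0:ℝ) T),
    MeasureTheory.eLpNorm (X t) (ENNReal.ofReal p) P

/-- Hölder norm in time of a stochastic process, measured in `L^p(P;E)`. -/
noncomputable def lpHolderNorm {Ω E : Type} [MeasurableSpace Ω] [NormedAddCommGroup E]
    (P : MeasureTheory.Measure Ω) (T p r : ℝ) (X : ℝ → Ω → E) : ℝ≥0∞ :=
  lpSupNorm P T p X + lpHolderSemi P T p r X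

/-- Maximal mesh size of the partition with nodes `θ 0 < θ 1 < … < θ K`. -/
noncomputable def dMax (K : ℕ) (θ : ℕ → ℝ) : ℝ := ⨆ j : Fin K, (θ (j + 1) - θ j)

section HolderEstimates

variable {Ω E : Type} [MeasurableSpace Ω] [NormedAddCommGroup E] {P : Measure Ω} {T p : ℝ}

theorem eLpNorm_sub_le_lpHolderSemi_mul (r : ℝ) (X : ℝ → Ω → E) {s t : ℝ}
    (hs : s ∈ Set.Icc 0 T) (ht : t ∈ Set.Icc 0 T) :
    eLpNorm (fun ω => X s ω - X t ω) (ENNReal.ofReal p) P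
      ≤ lpHolderSemi P T p r X * ENNReal.ofReal (|s - t| ^ r) := by
  rcases eq_or_ne s t with rfl | hst
  · simp
  have hpos : 0 < |s - t| ^ r := Real.rpow_pos_of_pos (abs_pos.2 (sub_ne_zero.2 hst)) r
  rw [← ENNReal.div_le_iff (ENNReal.ofReal_pos.2 hpos).ne' ENNReal.ofReal_ne_top]
  exact le_iSup_of_le s <| le_iSup_of_le t <| le_iSup_of_le hs <| le_iSup_of_le ht <|
    le_iSup_of_le hst le_rfl

theorem lpHolderSemi_le_of_forall {r : ℝ} {X : ℝ → Ω → E} {C : ℝ≥0∞}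
    (hC : ∀ s ∈ Set.Icc 0 T, ∀ t ∈ Set.Icc 0 T, s ≠ t →
      eLpNorm (fun ω => X s ω - X t ω) (ENNReal.ofReal p) P ≤ C * ENNReal.ofReal (|s - t| ^ r)) :
    lpHolderSemi P T p r X ≤ C :=
  iSup_le fun s => iSup_le fun t => iSup_le fun hs => iSup_le fun ht => iSup_le fun hst =>
    ENNReal.div_le_of_le_mul (hC s hs t ht hst)

theorem lpHolderSemi_sub_le (hp : 1 ≤ p) {r : ℝ} {X Y : ℝ → Ω → E}
    (hX : ∀ t ∈ Set.Icc 0 T, AEStronglyMeasurable (X t) P)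
    (hY : ∀ t ∈ Set.Icc 0 T, AEStronglyMeasurable (Y t) P) :
    lpHolderSemi P T p r (fun t ω => X t ω - Y t ω)
      ≤ lpHolderSemi P T p r X + lpHolderSemi P T p r Y := by
  refine lpHolderSemi_le_of_forall fun s hs t ht _ => ?_
  have hsplit : (fun ω => (X s ω - Y s ω) - (X t ω - Y t ω))
      = (fun ω => X s ω - X t ω) - (fun ω => Y s ω - Y t ω) := by
    funext ω; simp only [Pi.sub_apply]; abel
  calc eLpNorm (fun ω => (X s ω - Y s ω) - (X t ω - Y t ω)) (ENNReal.ofReal p) P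
      ≤ eLpNorm (fun ω => X s ω - X t ω) (ENNReal.ofReal p) P
        + eLpNorm (fun ω => Y s ω - Y t ω) (ENNReal.ofReal p) P := by
        rw [hsplit]
        exact eLpNorm_sub_le ((hX s hs).sub (hX t ht)) ((hY s hs).sub (hY t ht))
          (ENNReal.one_le_ofReal.2 hp)
    _ ≤ _ := by
        rw [add_mul]
        exact add_le_add (eLpNorm_sub_le_lpHolderSemi_mul r X hs ht)
          (eLpNorm_sub_le_lpHolderSemi_mul r Y hs ht)

variable {Z : ℝ → Ω → E}

theorem lpSupNorm_le_add_rpow_mul_lpHolderSemi (hp : 1 ≤ p) {γ h : ℝ} {N : ℝ≥0∞} (hγ : 0 ≤ γ)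
    (hZ : ∀ t ∈ Set.Icc 0 T, AEStronglyMeasurable (Z t) P)
    (hnear : ∀ t ∈ Set.Icc 0 T, ∃ s ∈ Set.Icc 0 T,
      |t - s| ≤ h ∧ eLpNorm (Z s) (ENNReal.ofReal p) P ≤ N) :
    lpSupNorm P T p Z ≤ N + ENNReal.ofReal (h ^ γ) * lpHolderSemi P T p γ Z := by
  refine iSup₂_le fun t ht => ?_
  obtain ⟨s, hs, hts, hN⟩ := hnear t ht
  calc eLpNorm (Z t) (ENNReal.ofReal p) P
      ≤ eLpNorm (Z s) (ENNReal.ofReal p) P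
        + eLpNorm (fun ω => Z t ω - Z s ω) (ENNReal.ofReal p) P := by
        have h := eLpNorm_add_le (hZ s hs) ((hZ t ht).sub (hZ s hs))
          (ENNReal.one_le_ofReal.2 hp)
        rwa [add_sub_cancel] at h
    _ ≤ N + lpHolderSemi P T p γ Z * ENNReal.ofReal (|t - s| ^ γ) :=
        add_le_add hN (eLpNorm_sub_le_lpHolderSemi_mul γ Z ht hs)
    _ ≤ N + ENNReal.ofReal (h ^ γ) * lpHolderSemi P T p γ Z := by
        rw [mul_comm]
        gcongr

theorem eLpNorm_le_lpSupNorm {t : ℝ} (ht : t ∈ Set.Icc 0 T) :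
    eLpNorm (Z t) (ENNReal.ofReal p) P ≤ lpSupNorm P T p Z :=
  le_iSup₂ (f := fun t (_ : t ∈ Set.Icc 0 T) => eLpNorm (Z t) (ENNReal.ofReal p) P) t ht

theorem lpHolderSemi_le_rpow_neg_mul_max (hp : 1 ≤ p) {β γ h : ℝ} (hβ : 0 ≤ β) (hβγ : β ≤ γ)
    (hh : 0 < h) (hZ : ∀ t ∈ Set.Icc 0 T, AEStronglyMeasurable (Z t) P) :
    lpHolderSemi P T p β Z ≤ ENNReal.ofReal (h ^ (-β)) *
      max (ENNReal.ofReal (h ^ γ) * lpHolderSemi P T p γ Z) (2 * lpSupNorm P T p Z) := by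
  refine lpHolderSemi_le_of_forall fun s hs t ht hst => ?_
  have hd : 0 < |s - t| := abs_pos.2 (sub_ne_zero.2 hst)
  rcases le_or_gt |s - t| h with hsmall | hlarge
  · have hreal : |s - t| ^ γ ≤ h ^ (-β) * h ^ γ * |s - t| ^ β :=
      calc |s - t| ^ γ = |s - t| ^ (γ - β) * |s - t| ^ β := by
            rw [← Real.rpow_add hd, sub_add_cancel]
        _ ≤ h ^ (γ - β) * |s - t| ^ β := by gcongr
        _ = h ^ (-β) * h ^ γ * |s - t| ^ β := by rw [sub_eq_neg_add, Real.rpow_add hh]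
    calc eLpNorm (fun ω => Z s ω - Z t ω) (ENNReal.ofReal p) P
        ≤ lpHolderSemi P T p γ Z * ENNReal.ofReal (|s - t| ^ γ) :=
          eLpNorm_sub_le_lpHolderSemi_mul γ Z hs ht
      _ ≤ lpHolderSemi P T p γ Z * ENNReal.ofReal (h ^ (-β) * h ^ γ * |s - t| ^ β) := by
          gcongr
      _ = ENNReal.ofReal (h ^ (-β)) * (ENNReal.ofReal (h ^ γ) * lpHolderSemi P T p γ Z)
            * ENNReal.ofReal (|s - t| ^ β) := by
          rw [ENNReal.ofReal_mul (by positivity), ENNReal.ofReal_mul (by positivity)]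
          ring
      _ ≤ _ := by gcongr; exact le_max_left _ _
  · have hreal : 1 ≤ h ^ (-β) * |s - t| ^ β :=
      calc (1 : ℝ) = h ^ (-β) * h ^ β := by
            rw [Real.rpow_neg hh.le, inv_mul_cancel₀ (by positivity)]
        _ ≤ h ^ (-β) * |s - t| ^ β := by gcongr
    calc eLpNorm (fun ω => Z s ω - Z t ω) (ENNReal.ofReal p) P
        ≤ eLpNorm (Z s) (ENNReal.ofReal p) P + eLpNorm (Z t) (ENNReal.ofReal p) P :=
          eLpNorm_sub_le (hZ s hs) (hZ t ht) (ENNReal.one_le_ofReal.2 hp)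
      _ ≤ 2 * lpSupNorm P T p Z * ENNReal.ofReal 1 := by
          rw [ENNReal.ofReal_one, mul_one, two_mul]
          exact add_le_add (eLpNorm_le_lpSupNorm hs) (eLpNorm_le_lpSupNorm ht)
      _ ≤ 2 * lpSupNorm P T p Z * ENNReal.ofReal (h ^ (-β) * |s - t| ^ β) := by gcongr
      _ = ENNReal.ofReal (h ^ (-β)) * (2 * lpSupNorm P T p Z) * ENNReal.ofReal (|s - t| ^ β) := by
          rw [ENNReal.ofReal_mul (by positivity)]
          ring
      _ ≤ _ := by gcongr; exact le_max_right _ _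

theorem lpHolderNorm_le_of_forall_near (hp : 1 ≤ p) {β γ h : ℝ} {N : ℝ≥0∞} (hβ : 0 ≤ β)
    (hβγ : β ≤ γ) (hh : 0 < h) (hZ : ∀ t ∈ Set.Icc 0 T, AEStronglyMeasurable (Z t) P)
    (hnear : ∀ t ∈ Set.Icc 0 T, ∃ s ∈ Set.Icc 0 T,
      |t - s| ≤ h ∧ eLpNorm (Z s) (ENNReal.ofReal p) P ≤ N) :
    lpHolderNorm P T p β Z ≤ ENNReal.ofReal (2 * h ^ (-β) + 1) *
      (N + ENNReal.ofReal (h ^ γ) * lpHolderSemi P T p γ Z) := by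
  set B := N + ENNReal.ofReal (h ^ γ) * lpHolderSemi P T p γ Z
  have hsup : lpSupNorm P T p Z ≤ B :=
    lpSupNorm_le_add_rpow_mul_lpHolderSemi hp (hβ.trans hβγ) hZ hnear
  have hsemi : lpHolderSemi P T p β Z ≤ ENNReal.ofReal (h ^ (-β)) * (2 * B) :=
    (lpHolderSemi_le_rpow_neg_mul_max hp hβ hβγ hh hZ).trans <| by
      gcongr
      exact max_le (le_add_self.trans (by rw [two_mul]; exact le_add_self)) (by gcongr)
  calc lpHolderNorm P T p β Z = lpSupNorm P T p Z + lpHolderSemi P T p β Z := rfl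
    _ ≤ B + ENNReal.ofReal (h ^ (-β)) * (2 * B) := add_le_add hsup hsemi
    _ = ENNReal.ofReal (2 * h ^ (-β) + 1) * B := by
        rw [ENNReal.ofReal_add (by positivity) zero_le_one, ENNReal.ofReal_mul zero_le_two,
          ENNReal.ofReal_one, ENNReal.ofReal_ofNat]
        ring

end HolderEstimates

section Partition

variable {K : ℕ} {θ : ℕ → ℝ}

theorem sub_le_dMax {j : ℕ} (hj : j < K) : θ (j + 1) - θ j ≤ dMax K θ :=
  le_ciSup (f := fun j : Fin K => θ (j + 1) - θ j) (Set.finite_range _).bddAbove ⟨j, hj⟩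

theorem dMax_nonneg (hθ : ∀ j < K, θ j ≤ θ (j + 1)) : 0 ≤ dMax K θ :=
  Real.iSup_nonneg fun j => sub_nonneg.2 (hθ j j.2)

theorem monotoneOn_Iic_of_le_succ (hθ : ∀ j < K, θ j ≤ θ (j + 1)) :
    MonotoneOn θ (Set.Iic K) :=
  monotoneOn_of_le_add_one Set.ordConnected_Iic fun j _ _ hj => hθ j hj

theorem exists_abs_sub_le_dMax (hθ : ∀ j < K, θ j ≤ θ (j + 1)) {t : ℝ}
    (ht : t ∈ Set.Icc (θ 0) (θ K)) : ∃ j : Fin (K + 1), |t - θ j| ≤ dMax K θ := by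
  rcases ht.2.lt_or_eq with hlt | rfl
  · obtain ⟨j, hj, hjt⟩ := Set.mem_iUnion₂.1 (Ico_subset_biUnion_Ico K θ ⟨ht.1, hlt⟩)
    rw [Finset.mem_range] at hj
    refine ⟨⟨j, by omega⟩, ?_⟩
    rw [abs_of_nonneg (sub_nonneg.2 hjt.1)]
    exact (sub_le_sub_right hjt.2.le _).trans (sub_le_dMax hj)
  · exact ⟨Fin.last K, by simpa using dMax_nonneg hθ⟩

end Partition

theorem cor_hoelder1_i_general
    {Ω E : Type} [MeasurableSpace Ω] [NormedAddCommGroup E]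
    (T : ℝ)
    (K : ℕ) (hK : 1 ≤ K) (θ : ℕ → ℝ)
    (hθ0 : θ 0 = 0) (hθK : θ K = T)
    (hθmono : ∀ j, j < K → θ j < θ (j + 1))
    (P : Measure Ω)
    (p β γ : ℝ) (hp : 1 ≤ p) (hβ : β ∈ Set.Icc (0:ℝ) 1) (hγ : γ ∈ Set.Icc β 1)
    (X Y : ℝ → Ω → E)
    (hXmeas : ∀ t ∈ Set.Icc (0:ℝ) T, StronglyMeasurable (X t))
    (hYmeas : ∀ t ∈ Set.Icc (0:ℝ) T, StronglyMeasurable (Y t)) :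
    lpHolderNorm P T p β (fun t ω => X t ω - Y t ω)
      ≤ ENNReal.ofReal (2 * (dMax K θ) ^ (-β) + 1) *
          ((⨆ j : Fin (K + 1),
              eLpNorm (fun ω => X (θ j) ω - Y (θ j) ω) (ENNReal.ofReal p) P)
            + ENNReal.ofReal ((dMax K θ) ^ γ) *
                (lpHolderSemi P T p γ X + lpHolderSemi P T p γ Y)) := by
  have hθ : ∀ j < K, θ j ≤ θ (j + 1) := fun j hj => (hθmono j hj).le
  have hnode : ∀ j ≤ K, θ j ∈ Set.Icc 0 T := fun j hj => by
    have hm := monotoneOn_Iic_of_le_succ hθ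
    rw [← hθ0, ← hθK]
    exact ⟨hm (Nat.zero_le K) hj (Nat.zero_le j), hm hj (le_refl K) hj⟩
  have hh : 0 < dMax K θ := (sub_pos.2 (hθmono 0 hK)).trans_le (sub_le_dMax hK)
  have hXY : ∀ t ∈ Set.Icc 0 T, AEStronglyMeasurable (fun ω => X t ω - Y t ω) P :=
    fun t ht => ((hXmeas t ht).sub (hYmeas t ht)).aestronglyMeasurable
  refine (lpHolderNorm_le_of_forall_near (N := ⨆ j : Fin (K + 1),
      eLpNorm (fun ω => X (θ j) ω - Y (θ j) ω) (ENNReal.ofReal p) P)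
    hp hβ.1 hγ.1 hh hXY fun t ht => ?_).trans ?_
  · obtain ⟨j, hj⟩ := exists_abs_sub_le_dMax hθ (by rwa [hθ0, hθK])
    exact ⟨θ j, hnode j (Nat.lt_succ_iff.1 j.2), hj,
      le_iSup (fun j : Fin (K + 1) => eLpNorm (fun ω => X (θ j) ω - Y (θ j) ω) _ P) j⟩
  · gcongr
    exact lpHolderSemi_sub_le hp (fun t ht => (hXmeas t ht).aestronglyMeasurable)
      (fun t ht => (hYmeas t ht).aestronglyMeasurable)

/-- **Corollary 2.8 (i)** (grid point approximations): the Hölder-in-time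
`L^p`-distance of two stochastic processes is controlled by their distance at
the nodes of a partition plus a mesh-size term. -/
theorem cor_hoelder1_i
    {Ω E : Type} [MeasurableSpace Ω] [NormedAddCommGroup E] [NormedSpace ℝ E]
    [CompleteSpace E]
    (T : ℝ) (hT : 0 < T)
    (K : ℕ) (hK : 1 ≤ K) (θ : ℕ → ℝ)
    (hθ0 : θ 0 = 0) (hθK : θ K = T)
    (hθmono : ∀ j, j < K → θ j < θ (j + 1))
    (P : Measure Ω) [IsProbabilityMeasure P]
    (p β γ : ℝ) (hp : 1 ≤ p) (hβ : β ∈ Set.Icc (0:ℝ) 1) (hγ : γ ∈ Set.Icc β 1)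
    (X Y : ℝ → Ω → E)
    (hXmeas : ∀ t ∈ Set.Icc (0:ℝ) T, StronglyMeasurable (X t))
    (hYmeas : ∀ t ∈ Set.Icc (0:ℝ) T, StronglyMeasurable (Y t)) :
    lpHolderNorm P T p β (fun t ω => X t ω - Y t ω)
      ≤ ENNReal.ofReal (2 * (dMax K θ) ^ (-β) + 1) *
          ((⨆ j : Fin (K + 1),
              eLpNorm (fun ω => X (θ j) ω - Y (θ j) ω) (ENNReal.ofReal p) P)
            + ENNReal.ofReal ((dMax K θ) ^ γ) *
                (lpHolderSemi P T p γ X + lpHolderSemi P T p γ Y)) :=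
  cor_hoelder1_i_general T K hK θ hθ0 hθK hθmono P p β γ hp hβ hγ X Y hXmeas hYmeas
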